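/- arXiv:2105.02074 — 2 statements merged into one kernel-verified Lean document; each statement's English description precedes it below -/
import Mathlib

section
/- Let {E_i}_{i=1}^n be a POVM on ℂ^d with n ≥ 2 and every effect E_i nonzero, and let S be the n×n real symmetric Gram matrix with entries S_{ij} = tr(√E_i √E_j). Then the vector of eigenvalues of S majorizes the vector (1, (d−1)/(n−1), …, (d−1)/(n−1)); explicitly, the eigenvalues of S sum to d and, for every k with 1 ≤ k ≤ n, the sum of the k largest eigenvalues of S is at least 1 + (k−1)(d−1)/(n−1). -/
open Matrix BigOperators
open scoped ComplexOrder

noncomputable def Matrix.PosSemidef.sqrt {n : Type*} [Fintype n] [DecidableEq n]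
    {𝕜 : Type*} [RCLike 𝕜] {A : Matrix n n 𝕜} (hA : A.PosSemidef) : Matrix n n 𝕜 :=
  hA.1.eigenvectorUnitary.1 * diagonal ((↑) ∘ (√·) ∘ hA.1.eigenvalues) *
    (star hA.1.eigenvectorUnitary : Matrix n n 𝕜)

/-
Write `A i = √E i`, so that `S i j = tr (A i * A j)` and `∑ A i * A i = 1`; then `tr S = d`.
Testing `S` on `c i = tr (A i)` gives `c ⬝ S c = tr (M * M)` with `M = ∑ c i • A i`; Cauchy–Schwarz
on the spectrum of `M` gives `(tr M)² ≤ d · tr (M * M)`, and `tr M = ∑ c i² ≥ ∑ tr (A i * A i) = d`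
since `tr (A²) ≤ (tr A)²` for `A ≥ 0`. Hence the largest eigenvalue `μ` of `S` satisfies
`(tr M)² ≤ d μ tr M`, i.e. `μ ≥ 1`. Majorization then uses only `∑ λ = d` and `μ ≥ 1`: take `μ`
together with the `k - 1` largest other eigenvalues; each of these dominates each of the remaining
`n - k`, and averaging the two groups against each other gives the bound.
-/

namespace Matrix

open scoped MatrixOrder

section Spectral

variable {m 𝕜 : Type*} [Fintype m] [DecidableEq m] [RCLike 𝕜] {A : Matrix m m 𝕜}

lemma PosSemidef.sqrt_eq_cfcSqrt (hA : A.PosSemidef) : hA.sqrt = CFC.sqrt A := by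
  rw [CFC.sqrt_eq_cfc, cfc_nnreal_eq_real _ A (nonneg_iff_posSemidef.mpr hA), hA.1.cfc_eq,
    IsHermitian.cfc, Unitary.conjStarAlgAut_apply, PosSemidef.sqrt]
  simp only [Real.sqrt]

lemma PosSemidef.posSemidef_sqrt (hA : A.PosSemidef) : hA.sqrt.PosSemidef := by
  rw [hA.sqrt_eq_cfcSqrt, ← nonneg_iff_posSemidef]
  exact CFC.sqrt_nonneg A

lemma PosSemidef.sqrt_mul_self (hA : A.PosSemidef) : hA.sqrt * hA.sqrt = A := by
  rw [hA.sqrt_eq_cfcSqrt]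
  exact CFC.sqrt_mul_sqrt_self A (nonneg_iff_posSemidef.mpr hA)

lemma IsHermitian.trace_cfc (hA : A.IsHermitian) (f : ℝ → ℝ) :
    (cfc f A).trace = ∑ i, (f (hA.eigenvalues i) : 𝕜) := by
  rw [hA.cfc_eq, IsHermitian.cfc, Unitary.conjStarAlgAut_apply, trace_mul_cycle,
    Unitary.coe_star_mul_self, Matrix.one_mul, trace_diagonal]
  rfl

lemma IsHermitian.re_trace_mul_self (hA : A.IsHermitian) :
    RCLike.re (A * A).trace = ∑ i, hA.eigenvalues i ^ 2 := by
  rw [← sq, ← cfc_pow_id (R := ℝ) A 2 hA.isSelfAdjoint, hA.trace_cfc, map_sum]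
  simp only [RCLike.ofReal_re]

lemma IsHermitian.re_trace (hA : A.IsHermitian) :
    RCLike.re A.trace = ∑ i, hA.eigenvalues i := by
  simp [hA.trace_eq_sum_eigenvalues]

lemma IsHermitian.sq_re_trace_le_card_mul_re_trace_mul_self (hA : A.IsHermitian) :
    RCLike.re A.trace ^ 2 ≤ Fintype.card m * RCLike.re (A * A).trace := by
  rw [hA.re_trace, hA.re_trace_mul_self]
  exact sq_sum_le_card_mul_sum_sq

lemma PosSemidef.re_trace_mul_self_le (hA : A.PosSemidef) :
    RCLike.re (A * A).trace ≤ RCLike.re A.trace ^ 2 := by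
  rw [hA.1.re_trace, hA.1.re_trace_mul_self]
  exact Finset.sum_sq_le_sq_sum_of_nonneg fun i _ => hA.eigenvalues_nonneg i

lemma IsHermitian.re_dotProduct_mulVec_le (hA : A.IsHermitian) {r : ℝ}
    (hr : ∀ i, hA.eigenvalues i ≤ r) (v : m → 𝕜) :
    RCLike.re (star v ⬝ᵥ A *ᵥ v) ≤ r * RCLike.re (star v ⬝ᵥ v) := by
  have hle : A ≤ algebraMap ℝ _ r := le_algebraMap_of_spectrum_le (by
    rintro x hx
    obtain ⟨i, rfl⟩ := hA.spectrum_real_eq_range_eigenvalues ▸ hx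
    exact hr i) hA.isSelfAdjoint
  have := (le_iff.mp hle).re_dotProduct_nonneg v
  simpa [sub_mulVec, dotProduct_sub, algebraMap_eq_diagonal, Algebra.algebraMap_eq_smul_one,
    smul_mulVec, dotProduct_smul, RCLike.smul_re] using this

end Spectral

section Gram

variable {ι m 𝕜 : Type*} [Fintype ι] [Fintype m] [RCLike 𝕜]

lemma re_trace_sum_smul (A : ι → Matrix m m 𝕜) (v : ι → ℝ) :
    RCLike.re (∑ i, v i • A i).trace = ∑ i, v i * RCLike.re (A i).trace := by
  simp [trace_sum, trace_smul, RCLike.smul_re]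

lemma dotProduct_gram_mulVec (A : ι → Matrix m m 𝕜) (v : ι → ℝ) :
    v ⬝ᵥ (of fun i j => RCLike.re (A i * A j).trace) *ᵥ v =
      RCLike.re ((∑ i, v i • A i) * ∑ i, v i • A i).trace := by
  rw [Finset.sum_mul_sum]
  simp only [smul_mul_smul_comm, trace_sum, trace_smul, map_sum, RCLike.smul_re, dotProduct,
    mulVec, of_apply, Finset.mul_sum]
  refine Finset.sum_congr rfl fun i _ => Finset.sum_congr rfl fun j _ => ?_
  ring

end Gram

end Matrix

section Majorization

open Finset

variable {ι : Type*}

lemma Finset.exists_subset_card_eq_forall_le [DecidableEq ι] {α : Type*} [LinearOrder α]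
    (f : ι → α) (s : Finset ι) {k : ℕ} (hk : k ≤ #s) :
    ∃ t ⊆ s, #t = k ∧ ∀ i ∈ t, ∀ j ∈ s \ t, f j ≤ f i := by
  induction k with
  | zero => exact ⟨∅, empty_subset s, card_empty, by simp⟩
  | succ k ih =>
    obtain ⟨t, hts, htk, htop⟩ := ih (by omega)
    have hne : (s \ t).Nonempty := by
      rw [← card_pos, card_sdiff_of_subset hts]
      omega
    obtain ⟨j, hj, hjmax⟩ := exists_max_image (s \ t) f hne
    have hjt : j ∉ t := (mem_sdiff.mp hj).2
    refine ⟨insert j t, insert_subset (mem_sdiff.mp hj).1 hts,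
      by rw [card_insert_of_notMem hjt, htk], ?_⟩
    intro i hi l hl
    have hl' : l ∈ s \ t := by
      simp only [mem_sdiff, mem_insert, not_or] at hl ⊢
      exact ⟨hl.1, hl.2.2⟩
    rcases mem_insert.mp hi with rfl | hit
    · exact hjmax l hl'
    · exact htop i hit l hl'

lemma Finset.card_nsmul_sum_le_card_nsmul_sum {M : Type*} [AddCommMonoid M] [PartialOrder M]
    [IsOrderedAddMonoid M] (f : ι → M) {s t : Finset ι} (h : ∀ i ∈ s, ∀ j ∈ t, f j ≤ f i) :
    #s • ∑ j ∈ t, f j ≤ #t • ∑ i ∈ s, f i := by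
  calc #s • ∑ j ∈ t, f j = ∑ _i ∈ s, ∑ j ∈ t, f j := by rw [sum_const]
    _ ≤ ∑ i ∈ s, ∑ _j ∈ t, f i := sum_le_sum fun i hi => sum_le_sum fun j hj => h i hi j hj
    _ = #t • ∑ i ∈ s, f i := by rw [sum_comm, sum_const]

lemma exists_card_eq_sub_one_mul_sum_le [Fintype ι] [DecidableEq ι] (f : ι → ℝ) {i₀ : ι}
    (hi₀ : 1 ≤ f i₀) {k : ℕ} (hk1 : 1 ≤ k) (hk : k ≤ Fintype.card ι) :
    ∃ T : Finset ι, #T = k ∧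
      ((k : ℝ) - 1) * (∑ i, f i - 1) ≤ ((Fintype.card ι : ℝ) - 1) * (∑ i ∈ T, f i - 1) := by
  set s := univ.erase i₀
  have hs : #s = Fintype.card ι - 1 := card_erase_of_mem (mem_univ i₀)
  obtain ⟨t, hts, htk, htop⟩ := exists_subset_card_eq_forall_le f s (k := k - 1) (by omega)
  have hi₀t : i₀ ∉ t := fun h => by simpa [s] using hts h
  have hrest : #(s \ t) = Fintype.card ι - k := by rw [card_sdiff_of_subset hts]; omega
  have havg := card_nsmul_sum_le_card_nsmul_sum f htop
  have hsplit : ∑ i, f i = f i₀ + ∑ i ∈ t, f i + ∑ i ∈ s \ t, f i := by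
    rw [← add_sum_erase univ f (mem_univ i₀), ← sum_sdiff hts, add_assoc,
      add_comm (∑ i ∈ s \ t, f i)]
  refine ⟨insert i₀ t, by rw [card_insert_of_notMem hi₀t, htk]; omega, ?_⟩
  rw [sum_insert hi₀t, hsplit]
  rw [htk, hrest, nsmul_eq_mul, nsmul_eq_mul, Nat.cast_sub hk, Nat.cast_sub hk1,
    Nat.cast_one] at havg
  have hkn : (k : ℝ) ≤ Fintype.card ι := by exact_mod_cast hk
  nlinarith [mul_nonneg (sub_nonneg.2 hkn) (sub_nonneg.2 hi₀)]

end Majorization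

section SquaresSumToOne

variable {ι m 𝕜 : Type*} [Fintype ι] [DecidableEq ι] [Fintype m] [DecidableEq m] [RCLike 𝕜]
  {A : ι → Matrix m m 𝕜}

lemma sum_eigenvalues_gram (hsum : ∑ i, A i * A i = 1)
    (hG : (of fun i j => RCLike.re (A i * A j).trace).IsHermitian) :
    ∑ i, hG.eigenvalues i = Fintype.card m := by
  calc ∑ i, hG.eigenvalues i = ∑ i, RCLike.re (A i * A i).trace := by
        rw [← hG.re_trace, RCLike.re_to_real]; rfl
    _ = Fintype.card m := by rw [← map_sum, ← trace_sum, hsum]; simp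

lemma exists_one_le_eigenvalue_gram [Nonempty m] (hA : ∀ i, (A i).PosSemidef)
    (hsum : ∑ i, A i * A i = 1)
    (hG : (of fun i j => RCLike.re (A i * A j).trace).IsHermitian) :
    ∃ i, 1 ≤ hG.eigenvalues i := by
  have : Nonempty ι := by
    by_contra h
    rw [not_nonempty_iff] at h
    simp at hsum
  set c : ι → ℝ := fun i => RCLike.re (A i).trace
  set M := ∑ i, c i • A i
  set t := ∑ i, c i ^ 2
  have hM : M.IsHermitian :=
    isSelfAdjoint_sum _ fun i _ => (hA i).1.smul (IsSelfAdjoint.all (c i))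
  have htr : RCLike.re M.trace = t := by
    rw [re_trace_sum_smul]; simp [t, c, sq]
  have hdt : (Fintype.card m : ℝ) ≤ t :=
    calc (Fintype.card m : ℝ) = ∑ i, RCLike.re (A i * A i).trace := by
          rw [← map_sum, ← trace_sum, hsum]; simp
      _ ≤ t := Finset.sum_le_sum fun i _ => (hA i).re_trace_mul_self_le
  have hquad : c ⬝ᵥ (of fun i j => RCLike.re (A i * A j).trace) *ᵥ c = RCLike.re (M * M).trace :=
    dotProduct_gram_mulVec A c
  obtain ⟨i₀, hi₀⟩ := Finite.exists_max hG.eigenvalues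
  have hRayleigh := hG.re_dotProduct_mulVec_le hi₀ c
  have hcc : c ⬝ᵥ c = t := by simp [dotProduct, t, sq]
  simp only [star_trivial, RCLike.re_to_real, hquad, hcc] at hRayleigh
  have hCS := hM.sq_re_trace_le_card_mul_re_trace_mul_self
  rw [htr] at hCS
  have hm : (0 : ℝ) < Fintype.card m := by exact_mod_cast Fintype.card_pos
  have ht : t * t ≤ t * (Fintype.card m * hG.eigenvalues i₀) := by
    nlinarith [mul_le_mul_of_nonneg_left hRayleigh hm.le]
  have hmt : Fintype.card m ≤ Fintype.card m * hG.eigenvalues i₀ :=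
    hdt.trans (le_of_mul_le_mul_left ht (hm.trans_le hdt))
  exact ⟨i₀, (le_mul_iff_one_le_right hm).mp hmt⟩

end SquaresSumToOne

/-- For a POVM `{E_i}` on `ℂ^d` with `n ≥ 2` and all effects nonzero, the
eigenvalues of the Gram matrix `S`, `S_{ij} = tr(√E_i √E_j)`, majorize
`(1, (d−1)/(n−1), …, (d−1)/(n−1))`: they sum to `d` and, for every `1 ≤ k ≤ n`, the sum of
the `k` largest eigenvalues (equivalently, the largest sum over a `k`-element subset) is at
least `1 + (k−1)(d−1)/(n−1)`. -/
theorem gram_eigenvalues_majorize_ea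
    (d n : ℕ) (hn : 2 ≤ n)
    (E : Fin n → Matrix (Fin d) (Fin d) ℂ)
    (hE : ∀ i, (E i).PosSemidef)
    (hsum : ∑ i, E i = 1)
    (hne : ∀ i, E i ≠ 0)
    (S : Matrix (Fin n) (Fin n) ℝ)
    (hSdef : S = Matrix.of fun i j => ((hE i).sqrt * (hE j).sqrt).trace.re)
    (hS : S.IsHermitian) :
    (∑ i, hS.eigenvalues i = (d : ℝ))
    ∧ ∀ k : ℕ, 1 ≤ k → k ≤ n →
        ∃ T : Finset (Fin n), T.card = k ∧
          1 + ((k : ℝ) - 1) * ((d : ℝ) - 1) / ((n : ℝ) - 1) ≤ ∑ i ∈ T, hS.eigenvalues i := by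
  have : Nonempty (Fin d) := by
    refine Fin.pos_iff_nonempty.mp (Nat.pos_of_ne_zero fun hd => ?_)
    subst hd
    exact hne ⟨0, by omega⟩ (Subsingleton.elim _ _)
  have hsq : ∑ i, (hE i).sqrt * (hE i).sqrt = 1 := by
    simpa only [PosSemidef.sqrt_mul_self] using hsum
  subst hSdef
  have htrace : ∑ i, hS.eigenvalues i = d := by simpa using sum_eigenvalues_gram hsq hS
  obtain ⟨i₀, hi₀⟩ := exists_one_le_eigenvalue_gram (fun i => (hE i).posSemidef_sqrt) hsq hS
  refine ⟨htrace, fun k hk1 hkn => ?_⟩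
  obtain ⟨T, hTk, hT⟩ :=
    exists_card_eq_sub_one_mul_sum_le hS.eigenvalues hi₀ hk1 (by simpa using hkn)
  rw [htrace, Fintype.card_fin] at hT
  have hn1 : (0 : ℝ) < n - 1 := by
    have : (2 : ℝ) ≤ n := by exact_mod_cast hn
    linarith
  refine ⟨T, hTk, ?_⟩
  rw [← le_sub_iff_add_le', div_le_iff₀ hn1]
  linarith
end

section
/- Let {E_i}_{i=1}^n be a POVM on ℂ^d, and let (X_a)_{a=1}^{d²} be any family of Hermitian d×d complex matrices orthonormal with respect to the Hilbert–Schmidt inner product ⟨A,B⟩ = tr(AB). Define D = Σ_{a=1}^{d²} tr( (Σ_{l=1}^n √E_l X_a √E_l − X_a)² ), R = d − (1/d) Σ_{i=1}^n (tr √E_i)², and O = Σ_{i,j=1}^n (tr(√E_i √E_j))² − 2d + n. Then D = 2d(R + 1) − d² − n + O. -/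
/-!
The Hermitian matrices `X_a` form an orthonormal basis of `ℂ^{d×d}` for the Frobenius inner
product `tr (Aᴴ B)`, so Parseval's identity for matrix units gives the completeness relation
`∑_a (X_a)_{ij} (X_a)_{lk} = δ_{ik} δ_{jl}`, i.e. the swap identity
`∑_a tr (A X_a B X_a) = tr A · tr B`. Expanding the square in `D` and applying it term by term
gives `D = ∑_{l,m} tr(√E_l √E_m)² - 2 ∑_l (tr √E_l)² + d²`, which is the claimed combination of
`R` and `O`; all these traces are real because the `√E_l` are Hermitian.
-/

open Matrix BigOperators
open scoped ComplexOrder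

theorem Matrix.trace_sq_sum_mul_mul_sub_self {R ι m : Type*} [CommRing R] [Fintype ι] [Fintype m]
    [DecidableEq m] (S : ι → Matrix m m R) (Y : Matrix m m R) :
    ((∑ l, S l * Y * S l - Y) ^ 2).trace
      = ∑ l, ∑ k, (S k * S l * Y * (S l * S k) * Y).trace
        - 2 * ∑ l, (S l * Y * S l * Y).trace + (Y * Y).trace := by
  have hquad : ((∑ l, S l * Y * S l) * ∑ k, S k * Y * S k).trace
      = ∑ l, ∑ k, (S k * S l * Y * (S l * S k) * Y).trace := by
    simp only [Finset.sum_mul_sum, trace_sum]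
    refine Finset.sum_congr rfl fun l _ => Finset.sum_congr rfl fun k _ => ?_
    simp only [← Matrix.mul_assoc]
    rw [trace_mul_comm]
    simp only [Matrix.mul_assoc]
  rw [sq, sub_mul, mul_sub, mul_sub, trace_sub, trace_sub, trace_sub, trace_mul_comm Y, hquad,
    Finset.sum_mul, trace_sum]
  ring

open scoped InnerProductSpace

section HilbertSchmidtBasis

variable {𝕜 m n κ : Type*} [RCLike 𝕜] [Fintype m] [Fintype n]

theorem inner_toLp_uncurry_eq_trace (A B : Matrix m n 𝕜) :
    ⟪WithLp.toLp 2 (Function.uncurry A), WithLp.toLp 2 (Function.uncurry B)⟫_𝕜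
      = (Aᴴ * B).trace := by
  simp only [PiLp.inner_apply, RCLike.inner_apply, Fintype.sum_prod_type, trace, diag_apply,
    mul_apply, conjTranspose_apply, RCLike.star_def, mul_comm]
  exact Finset.sum_comm

variable [DecidableEq κ] {X : κ → Matrix m m 𝕜}

theorem orthonormal_toLp_uncurry_of_trace_mul_eq_ite (hX : ∀ a, (X a).IsHermitian)
    (hortho : ∀ a b, (X a * X b).trace = if a = b then 1 else 0) :
    Orthonormal 𝕜 fun a => WithLp.toLp 2 (Function.uncurry (X a)) := by
  rw [orthonormal_iff_ite]
  intro a b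
  rw [inner_toLp_uncurry_eq_trace, (hX a).eq, hortho]

variable [DecidableEq m] [Fintype κ]

theorem sum_mul_apply_eq_ite_of_trace_mul_eq_ite (hX : ∀ a, (X a).IsHermitian)
    (hortho : ∀ a b, (X a * X b).trace = if a = b then 1 else 0)
    (hcard : Fintype.card κ = Fintype.card m ^ 2) (i j k l : m) :
    ∑ a, X a i j * X a l k = if i = k ∧ j = l then 1 else 0 := by
  have hv := orthonormal_toLp_uncurry_of_trace_mul_eq_ite hX hortho
  have hcard' : Fintype.card κ = Module.finrank 𝕜 (EuclideanSpace 𝕜 (m × m)) := by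
    simp [hcard, sq]
  let b := OrthonormalBasis.mk hv (hv.linearIndependent.span_eq_top_of_card_eq_finrank' hcard').ge
  have := b.sum_inner_mul_inner (EuclideanSpace.single (i, j) 1) (EuclideanSpace.single (k, l) 1)
  simp only [b, OrthonormalBasis.coe_mk, EuclideanSpace.inner_single_left,
    EuclideanSpace.inner_single_right, PiLp.single_apply, Prod.mk.injEq] at this
  have hconj a : starRingEnd 𝕜 (X a k l) = X a l k := (hX a).apply l k
  simpa [Function.uncurry, hconj, eq_comm] using this

theorem sum_trace_mul_mul_mul_eq_trace_mul_trace (hX : ∀ a, (X a).IsHermitian)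
    (hortho : ∀ a b, (X a * X b).trace = if a = b then 1 else 0)
    (hcard : Fintype.card κ = Fintype.card m ^ 2) (A B : Matrix m m 𝕜) :
    ∑ a, (A * X a * B * X a).trace = A.trace * B.trace := by
  have hcomplete := sum_mul_apply_eq_ite_of_trace_mul_eq_ite hX hortho hcard
  calc ∑ a, (A * X a * B * X a).trace
      = ∑ i, ∑ l, ∑ k, ∑ j, ∑ a, A i j * B k l * X a j k * X a l i := by
        simp only [trace, diag_apply, mul_apply, Finset.sum_mul,
          Finset.sum_comm (γ := κ), mul_right_comm (A _ _) (X _ _ _)]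
    _ = A.trace * B.trace := by
        simp only [mul_assoc, ← Finset.mul_sum, hcomplete, ite_and, mul_ite, mul_one, mul_zero,
          Finset.sum_ite_eq', Finset.mem_univ, if_true]
        exact (Finset.sum_mul _ _ _).symm

theorem sum_trace_sq_sum_mul_mul_sub_self (hX : ∀ a, (X a).IsHermitian)
    (hortho : ∀ a b, (X a * X b).trace = if a = b then 1 else 0)
    (hcard : Fintype.card κ = Fintype.card m ^ 2) {ι : Type*} [Fintype ι] (S : ι → Matrix m m 𝕜) :
    ∑ a, ((∑ l, S l * X a * S l - X a) ^ 2).trace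
      = ∑ l, ∑ k, (S l * S k).trace ^ 2 - 2 * ∑ l, (S l).trace ^ 2 + (Fintype.card m : 𝕜) ^ 2 := by
  simp only [trace_sq_sum_mul_mul_sub_self, Finset.sum_add_distrib, Finset.sum_sub_distrib,
    ← Finset.mul_sum, Finset.sum_comm (γ := κ),
    sum_trace_mul_mul_mul_eq_trace_mul_trace hX hortho hcard, hortho, if_true]
  rw [Finset.sum_const, Finset.card_univ, hcard, nsmul_one, Nat.cast_pow]
  simp only [trace_mul_comm (S _) (S _), sq]

end HilbertSchmidtBasis

theorem Matrix.PosSemidef.isHermitian_sqrt {m 𝕜 : Type*} [Fintype m] [DecidableEq m] [RCLike 𝕜]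
    {A : Matrix m m 𝕜} (hA : A.PosSemidef) : hA.sqrt.IsHermitian := by
  rw [sqrt, star_eq_conjTranspose]
  refine isHermitian_mul_mul_conjTranspose _ (isHermitian_diagonal_of_self_adjoint _ ?_)
  ext i
  simp

section RealTrace

variable {m : Type*} [Fintype m] {A B : Matrix m m ℂ}

theorem Matrix.IsHermitian.ofReal_re_trace (hA : A.IsHermitian) : (A.trace.re : ℂ) = A.trace :=
  Complex.conj_eq_iff_re.mp (by rw [← Complex.star_def, ← trace_conjTranspose, hA.eq])

theorem Matrix.IsHermitian.ofReal_re_trace_mul (hA : A.IsHermitian) (hB : B.IsHermitian) :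
    ((A * B).trace.re : ℂ) = (A * B).trace :=
  Complex.conj_eq_iff_re.mp (by
    rw [← Complex.star_def, ← trace_conjTranspose, conjTranspose_mul, hA.eq, hB.eq, trace_mul_comm])

end RealTrace

theorem disturbance_decomposition_general
    (d n : ℕ) (E : Fin n → Matrix (Fin d) (Fin d) ℂ)
    (hE : ∀ i, (E i).PosSemidef)
    (X : Fin (d ^ 2) → Matrix (Fin d) (Fin d) ℂ)
    (hXherm : ∀ a, (X a).IsHermitian)
    (hXortho : ∀ a b, (X a * X b).trace = if a = b then 1 else 0)
    (R O : ℝ)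
    (hR : R = (d : ℝ) - (1 / (d : ℝ)) * ∑ i, (((hE i).sqrt).trace.re) ^ 2)
    (hO : O = ∑ i, ∑ j, (((hE i).sqrt * (hE j).sqrt).trace.re) ^ 2 - 2 * (d : ℝ) + (n : ℝ)) :
    ∑ a, ((∑ l, (hE l).sqrt * X a * (hE l).sqrt - X a) ^ 2).trace
      = ((2 * (d : ℝ) * (R + 1) - (d : ℝ) ^ 2 - (n : ℝ) + O : ℝ) : ℂ) := by
  have hS i := (hE i).isHermitian_sqrt
  have hreal : 2 * (d : ℝ) * (R + 1) - (d : ℝ) ^ 2 - (n : ℝ) + O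
      = ∑ i, ∑ j, (((hE i).sqrt * (hE j).sqrt).trace.re) ^ 2
        - 2 * ∑ i, (((hE i).sqrt).trace.re) ^ 2 + (d : ℝ) ^ 2 := by
    rcases eq_or_ne d 0 with rfl | hd
    -- for `d = 0` the junk value `1 / 0 = 0` is harmless: every trace over `Fin 0` vanishes
    · simp [hR, hO, trace]
    · rw [hR, hO]
      field_simp
      ring
  rw [sum_trace_sq_sum_mul_mul_sub_self hXherm hXortho (by simp [sq]), hreal]
  push_cast
  simp only [(hS _).ofReal_re_trace, (hS _).ofReal_re_trace_mul (hS _), Fintype.card_fin]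

/-- For a POVM `{E_i}` on `ℂ^d` and any Hilbert–Schmidt orthonormal family
`(X_a)_{a=1}^{d²}` of Hermitian matrices, the disturbance
`D = Σ_a tr((Σ_l √E_l X_a √E_l − X_a)²)`, measurement strength
`R = d − (1/d) Σ_i (tr √E_i)²`, and orthogonality
`O = Σ_{i,j} (tr(√E_i √E_j))² − 2d + n` satisfy `D = 2d(R + 1) − d² − n + O`. -/
theorem disturbance_decomposition
    (d n : ℕ) (E : Fin n → Matrix (Fin d) (Fin d) ℂ)
    (hE : ∀ i, (E i).PosSemidef)
    (hsum : ∑ i, E i = 1)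
    (X : Fin (d ^ 2) → Matrix (Fin d) (Fin d) ℂ)
    (hXherm : ∀ a, (X a).IsHermitian)
    (hXortho : ∀ a b, (X a * X b).trace = if a = b then 1 else 0)
    (R O : ℝ)
    (hR : R = (d : ℝ) - (1 / (d : ℝ)) * ∑ i, (((hE i).sqrt).trace.re) ^ 2)
    (hO : O = ∑ i, ∑ j, (((hE i).sqrt * (hE j).sqrt).trace.re) ^ 2 - 2 * (d : ℝ) + (n : ℝ)) :
    ∑ a, ((∑ l, (hE l).sqrt * X a * (hE l).sqrt - X a) ^ 2).trace
      = ((2 * (d : ℝ) * (R + 1) - (d : ℝ) ^ 2 - (n : ℝ) + O : ℝ) : ℂ) :=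
  disturbance_decomposition_general d n E hE X hXherm hXortho R O hR hO
end
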